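/- arXiv:1610.03784 — 2 statements merged into one kernel-verified Lean document; each statement's English description precedes it below -/
import Mathlib

section
/- Let μ be a Radon measure on ℝⁿ, B a Borel set, s ∈ [0,n], and t > 0. If for every x ∈ B one has limsup_{r→0⁺} μ(B_r(x)) / (ω_s r^s) ≥ t, then μ(B) ≥ t · H^s(B), where H^s denotes the s-dimensional Hausdorff measure and ω_s is the usual normalizing constant. -/
open MeasureTheory Metric Filter Set
open scoped ENNReal Topology

/-!
Fix `a < t` and an open `U ⊇ B`. Every point of `B` is the centre of arbitrarily small closed balls
inside `U` with `μ (ball x r) ≥ a ω_s r^s`; Vitali's lemma extracts a disjoint subfamily whose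
enlargements cover `B`, and disjointness gives `∑ a ω_s rᵢ^s ≤ μ U`. As this sum is finite, all but
finitely many balls may be tripled at arbitrarily small cost in the Hausdorff sum, while the
remaining balls of radius `rᵢ` contribute `(2 rᵢ)^s` each. Hence `a ω_s 2^{-s} μH[s] B ≤ μ U`, and
outer regularity together with `a → t` finishes the proof.
-/

/-- The usual normalizing constant `ω_s = π^{s/2} / Γ(s/2 + 1)`. -/
noncomputable def omegaConst (s : ℝ) : ℝ := Real.pi ^ (s / 2) / Real.Gamma (s / 2 + 1)

/-- The `s`-dimensional Hausdorff measure on `ℝⁿ`, normalized (with the constant `ω_s`)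
so that `H^n` coincides with Lebesgue measure. -/
noncomputable def normHausdorff (n : ℕ) (s : ℝ) : Measure (EuclideanSpace ℝ (Fin n)) :=
  (ENNReal.ofReal (omegaConst s / 2 ^ s)) • (μH[s] : Measure (EuclideanSpace ℝ (Fin n)))

section MetricSpace

variable {X : Type*} [MetricSpace X]

theorem ediam_closedBall_le_two_mul (x : X) {r : ℝ} (hr : 0 ≤ r) :
    ediam (closedBall x r) ≤ 2 * ENNReal.ofReal r := by
  rw [← closedEBall_ofReal hr]
  exact ediam_closedEBall_le

theorem ediam_closedBall_rpow_le {s : ℝ} (hs : 0 ≤ s) (x : X) {r : ℝ} (hr : 0 ≤ r) :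
    ediam (closedBall x r) ^ s ≤ 2 ^ s * ENNReal.ofReal r ^ s := by
  rw [← ENNReal.mul_rpow_of_nonneg _ _ hs]
  exact ENNReal.rpow_le_rpow (ediam_closedBall_le_two_mul x hr) hs

theorem subset_iUnion_closedBall_of_vitali {ι : Type*} {B : Set X} {T : Set (X × ℝ)}
    (hfine : ∀ x ∈ B, ∀ ε > 0, ∃ r < ε, (x, r) ∈ T) (c : ι → X) (r : ι → ℝ)
    (hvitali : ∀ p ∈ T, ∃ i, (closedBall p.1 p.2 ∩ closedBall (c i) (r i)).Nonempty ∧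
      p.2 ≤ 2 * r i)
    {w : Set ι} (hw : w.Finite) (ρ : ι → ℝ) (hρw : ∀ i ∈ w, r i ≤ ρ i)
    (hρ : ∀ i ∉ w, 3 * r i ≤ ρ i) :
    B ⊆ ⋃ i, closedBall (c i) (ρ i) := by
  intro x hx
  set W := ⋃ i ∈ w, closedBall (c i) (r i)
  by_cases hxW : x ∈ W
  · obtain ⟨i, hi, hxi⟩ := mem_iUnion₂.1 hxW
    exact mem_iUnion.2 ⟨i, closedBall_subset_closedBall (hρw i hi) hxi⟩
  obtain ⟨ε, hε, hεW⟩ : ∃ ε > 0, ball x ε ⊆ Wᶜ :=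
    Metric.isOpen_iff.1 (hw.isClosed_biUnion fun _ _ => isClosed_closedBall).isOpen_compl x hxW
  obtain ⟨r₀, hr₀, hxr₀⟩ := hfine x hx ε hε
  obtain ⟨i, ⟨y, hyx, hyi⟩, hr₀i⟩ := hvitali _ hxr₀
  have hiw : i ∉ w := fun hi =>
    hεW (mem_ball.2 ((mem_closedBall.1 hyx).trans_lt hr₀)) (mem_biUnion hi hyi)
  refine mem_iUnion.2 ⟨i, mem_closedBall.2 ?_⟩
  calc dist x (c i) ≤ dist y x + dist y (c i) := dist_triangle_left _ _ _
    _ ≤ ρ i := by linarith [mem_closedBall.1 hyx, mem_closedBall.1 hyi, hρ i hiw]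

theorem tsum_ediam_closedBall_enlarge_rpow_le {ι : Type*} [DecidableEq ι] {s : ℝ} (hs : 0 ≤ s)
    (c : ι → X) {r : ι → ℝ} (hr : ∀ i, 0 ≤ r i) (w : Finset ι) :
    ∑' i, ediam (closedBall (c i) (if i ∈ w then r i else 3 * r i)) ^ s ≤
      2 ^ s * ∑' i, ENNReal.ofReal (r i) ^ s +
        6 ^ s * ∑' i : {i // i ∉ w}, ENNReal.ofReal (r i) ^ s := by
  have hterm (i : ι) : ediam (closedBall (c i) (if i ∈ w then r i else 3 * r i)) ^ s ≤
      2 ^ s * ENNReal.ofReal (r i) ^ s +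
        (↑w : Set ι)ᶜ.indicator (fun i => 6 ^ s * ENNReal.ofReal (r i) ^ s) i := by
    by_cases hi : i ∈ w
    · simpa [hi] using ediam_closedBall_rpow_le hs (c i) (hr i)
    · rw [if_neg hi, indicator_of_mem (by simpa using hi)]
      refine (ediam_closedBall_rpow_le hs (c i) (by linarith [hr i])).trans
        (le_add_left (le_of_eq ?_))
      rw [ENNReal.ofReal_mul zero_le_three, ENNReal.ofReal_ofNat,
        ENNReal.mul_rpow_of_nonneg _ _ hs, ← mul_assoc, ← ENNReal.mul_rpow_of_nonneg _ _ hs]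
      norm_num
  calc _ ≤ ∑' i, (2 ^ s * ENNReal.ofReal (r i) ^ s +
          (↑w : Set ι)ᶜ.indicator (fun i => 6 ^ s * ENNReal.ofReal (r i) ^ s) i) :=
        ENNReal.tsum_le_tsum hterm
    _ = _ := by
        rw [ENNReal.tsum_add, ENNReal.tsum_mul_left, ← tsum_subtype, ENNReal.tsum_mul_left]
        rfl

theorem exists_countable_cover_tsum_ediam_rpow_le {s : ℝ} (hs : 0 ≤ s) {B : Set X}
    {T : Set (X × ℝ)} {δ : ℝ} (hT : ∀ p ∈ T, 0 < p.2 ∧ p.2 ≤ δ)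
    (hfine : ∀ x ∈ B, ∀ ε > 0, ∃ r < ε, (x, r) ∈ T) {M : ℝ≥0∞} (hM : M ≠ ∞)
    (hsum : ∀ u ⊆ T, u.PairwiseDisjoint (fun p => closedBall p.1 p.2) →
      ∑' p : u, ENNReal.ofReal p.1.2 ^ s ≤ M)
    {η : ℝ≥0∞} (hη : η ≠ 0) :
    ∃ u : Set (X × ℝ), Countable u ∧ ∃ t : u → Set X, B ⊆ ⋃ i, t i ∧
      (∀ i, ediam (t i) ≤ ENNReal.ofReal (6 * δ)) ∧
      ∑' i, ediam (t i) ^ s ≤ 2 ^ s * M + η := by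
  classical
  obtain ⟨u, huT, hdisj, hvitali⟩ := Vitali.exists_disjoint_subfamily_covering_enlargement
    (fun p : X × ℝ => closedBall p.1 p.2) T Prod.snd 2 one_lt_two (fun p hp => (hT p hp).1.le)
    δ (fun p hp => (hT p hp).2) (fun p hp => nonempty_closedBall.2 (hT p hp).1.le)
  set m : u → ℝ≥0∞ := fun p => ENNReal.ofReal p.1.2 ^ s
  have hm : ∑' p, m p ≠ ∞ := ((hsum u huT hdisj).trans_lt hM.lt_top).ne
  have hu : Countable u := Set.countable_univ_iff.1 <|
    (Summable.countable_support_ennreal hm).mono fun p _ =>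
      (ENNReal.rpow_pos (ENNReal.ofReal_pos.2 (hT p (huT p.2)).1) ENNReal.ofReal_ne_top).ne'
  have h6 : (6 : ℝ≥0∞) ^ s ≠ ∞ := ENNReal.rpow_ne_top_of_nonneg hs (by norm_num)
  -- Tripling every ball would cost a factor `3^s`; a finite tail sum lets us triple only the
  -- balls outside a finite set `w`, at a cost below `η`.
  obtain ⟨w, hw⟩ : ∃ w : Finset u, ∑' p : {p // p ∉ w}, m p < η / 6 ^ s :=
    ((ENNReal.tendsto_tsum_compl_atTop_zero hm).eventually_lt_const
      (ENNReal.div_pos hη h6)).exists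
  set ρ : u → ℝ := fun p => if p ∈ w then p.1.2 else 3 * p.1.2
  have hr (p : u) : 0 < p.1.2 := (hT p (huT p.2)).1
  refine ⟨u, hu, fun p => closedBall p.1.1 (ρ p), ?_, fun p => ?_, ?_⟩
  · refine subset_iUnion_closedBall_of_vitali hfine (fun p : u => p.1.1) (fun p : u => p.1.2)
      (fun p hp => ?_) w.finite_toSet ρ (fun p hp => (if_pos (Finset.mem_coe.1 hp)).ge)
      (fun p hp => (if_neg hp).ge)
    obtain ⟨b, hb, hpb⟩ := hvitali p hp
    exact ⟨⟨b, hb⟩, hpb⟩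
  · have hρ : 0 ≤ ρ p ∧ ρ p ≤ 3 * δ := by
      obtain ⟨h0, hδ⟩ := hT p (huT p.2)
      simp only [ρ]
      constructor <;> split_ifs <;> linarith
    calc ediam (closedBall p.1.1 (ρ p)) ≤ 2 * ENNReal.ofReal (ρ p) :=
          ediam_closedBall_le_two_mul _ hρ.1
      _ ≤ 2 * ENNReal.ofReal (3 * δ) := by gcongr; exact hρ.2
      _ = ENNReal.ofReal (6 * δ) := by
          rw [← ENNReal.ofReal_ofNat 2, ← ENNReal.ofReal_mul zero_le_two]
          ring_nf
  · calc ∑' p, ediam (closedBall p.1.1 (ρ p)) ^ s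
        ≤ 2 ^ s * ∑' p, m p + 6 ^ s * ∑' p : {p // p ∉ w}, m p :=
          tsum_ediam_closedBall_enlarge_rpow_le hs (fun p : u => p.1.1) (fun p => (hr p).le) w
      _ ≤ 2 ^ s * M + η := by
          gcongr
          · exact hsum u huT hdisj
          · exact (mul_le_mul_right hw.le _).trans ENNReal.mul_div_le

theorem hausdorffMeasure_le_of_forall_pairwiseDisjoint [MeasurableSpace X] [BorelSpace X]
    {s : ℝ} (hs : 0 ≤ s) {B : Set X} {T : Set (X × ℝ)} (hT : ∀ p ∈ T, 0 < p.2)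
    (hfine : ∀ x ∈ B, ∀ ε > 0, ∃ r < ε, (x, r) ∈ T) {M : ℝ≥0∞}
    (hsum : ∀ u ⊆ T, u.PairwiseDisjoint (fun p => closedBall p.1 p.2) →
      ∑' p : u, ENNReal.ofReal p.1.2 ^ s ≤ M) :
    μH[s] B ≤ 2 ^ s * M := by
  rcases eq_or_ne M ∞ with rfl | hM
  · simp [ENNReal.mul_top, ENNReal.rpow_eq_zero_iff]
  refine ENNReal.le_of_forall_pos_le_add fun η hη _ => ?_
  have hscale (n : ℕ) := exists_countable_cover_tsum_ediam_rpow_le hs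
    (T := {p ∈ T | p.2 ≤ 1 / (n + 1)}) (fun p hp => ⟨hT p hp.1, hp.2⟩)
    (fun x hx ε hε => by
      obtain ⟨r, hr, hxr⟩ := hfine x hx (min ε (1 / (n + 1))) (by positivity)
      exact ⟨r, hr.trans_le (min_le_left _ _), hxr, hr.le.trans (min_le_right _ _)⟩)
    hM (fun u hu => hsum u (hu.trans (sep_subset T _))) (ENNReal.coe_ne_zero.2 hη.ne')
  choose u hu t hcover hdiam hle using hscale
  have hradius : Tendsto (fun n : ℕ => ENNReal.ofReal (6 * (1 / (n + 1)))) atTop (𝓝 0) := by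
    simpa using ENNReal.tendsto_ofReal (tendsto_one_div_add_atTop_nhds_zero_nat.const_mul 6)
  calc μH[s] B ≤ liminf (fun n => ∑' i, ediam (t n i) ^ s) atTop :=
        Measure.hausdorffMeasure_le_liminf_tsum s B _ hradius t (Eventually.of_forall hdiam)
          (Eventually.of_forall hcover)
    _ ≤ 2 ^ s * M + η := liminf_le_of_frequently_le' (Frequently.of_forall hle)

theorem mul_hausdorffMeasure_le_of_isOpen [MeasurableSpace X] [BorelSpace X] (μ : Measure X)
    {s : ℝ} (hs : 0 ≤ s) {c : ℝ≥0∞} (hc : c ≠ ∞) {B U : Set X} (hU : IsOpen U)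
    (hBU : B ⊆ U)
    (hball : ∀ x ∈ B, ∃ᶠ r in 𝓝[>] 0, c * ENNReal.ofReal r ^ s ≤ μ (ball x r)) :
    c * μH[s] B ≤ 2 ^ s * μ U := by
  rcases eq_or_ne c 0 with rfl | hc0
  · simp
  set T : Set (X × ℝ) := {p | 0 < p.2 ∧ closedBall p.1 p.2 ⊆ U ∧
    c * ENNReal.ofReal p.2 ^ s ≤ μ (ball p.1 p.2)}
  have hfine : ∀ x ∈ B, ∀ ε > 0, ∃ r < ε, (x, r) ∈ T := by
    intro x hx ε hε
    obtain ⟨ρ, hρ, hxρ⟩ := nhds_basis_closedBall.mem_iff.1 (hU.mem_nhds (hBU hx))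
    obtain ⟨r, hr, ⟨hr0, hrε⟩, -, hrρ⟩ := ((hball x hx).and_eventually
      (inter_mem (Ioo_mem_nhdsGT hε) (Ioc_mem_nhdsGT hρ))).exists
    exact ⟨r, hrε, hr0, (closedBall_subset_closedBall hrρ).trans hxρ, hr⟩
  have hsum : ∀ u ⊆ T, u.PairwiseDisjoint (fun p => closedBall p.1 p.2) →
      ∑' p : u, ENNReal.ofReal p.1.2 ^ s ≤ μ U / c := by
    intro u huT hdisj
    rw [ENNReal.le_div_iff_mul_le (.inl hc0) (.inl hc), mul_comm, ← ENNReal.tsum_mul_left]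
    calc ∑' p : u, c * ENNReal.ofReal p.1.2 ^ s ≤ ∑' p : u, μ (ball p.1.1 p.1.2) :=
          ENNReal.tsum_le_tsum fun p => (huT p.2).2.2
      _ ≤ μ (⋃ p : u, ball p.1.1 p.1.2) :=
          tsum_meas_le_meas_iUnion_of_disjoint μ (fun _ => measurableSet_ball)
            fun p q hpq => (hdisj p.2 q.2 (Subtype.val_injective.ne hpq)).mono
              ball_subset_closedBall ball_subset_closedBall
      _ ≤ μ U := measure_mono <| iUnion_subset fun p =>
          ball_subset_closedBall.trans (huT p.2).2.1
  calc c * μH[s] B ≤ c * (2 ^ s * (μ U / c)) := by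
        gcongr
        exact hausdorffMeasure_le_of_forall_pairwiseDisjoint hs (fun p hp => hp.1) hfine hsum
    _ = 2 ^ s * (c * (μ U / c)) := by ring
    _ ≤ 2 ^ s * μ U := by gcongr; exact ENNReal.mul_div_le

theorem mul_hausdorffMeasure_le [MeasurableSpace X] [BorelSpace X] (μ : Measure X)
    [μ.OuterRegular] {s : ℝ} (hs : 0 ≤ s) {c : ℝ≥0∞} (hc : c ≠ ∞) {B : Set X}
    (hball : ∀ x ∈ B, ∃ᶠ r in 𝓝[>] 0, c * ENNReal.ofReal r ^ s ≤ μ (ball x r)) :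
    c * μH[s] B ≤ 2 ^ s * μ B := by
  have h2 : (2 : ℝ≥0∞) ^ s ≠ ∞ := ENNReal.rpow_ne_top_of_nonneg hs (by norm_num)
  have h2' : (2 : ℝ≥0∞) ^ s ≠ 0 := by simp [ENNReal.rpow_eq_zero_iff]
  rw [← ENNReal.div_le_iff' h2' h2, Set.measure_eq_iInf_isOpen B μ]
  refine le_iInf₂ fun U hBU => le_iInf fun hU => ?_
  rw [ENNReal.div_le_iff' h2' h2]
  exact mul_hausdorffMeasure_le_of_isOpen μ hs hc hU hBU hball

end MetricSpace

theorem density_lower_estimate_general {n : ℕ} (μ : Measure (EuclideanSpace ℝ (Fin n)))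
    [μ.Regular] (B : Set (EuclideanSpace ℝ (Fin n)))
    (s t : ℝ) (hs0 : 0 ≤ s)
    (hdens : ∀ x ∈ B, ENNReal.ofReal t ≤
      Filter.limsup
        (fun r : ℝ => μ (ball x r) / ENNReal.ofReal (omegaConst s * r ^ s))
        (nhdsWithin 0 (Set.Ioi 0))) :
    ENNReal.ofReal t * normHausdorff n s B ≤ μ B := by
  set ω := ENNReal.ofReal (omegaConst s)
  have hball : ∀ a < ENNReal.ofReal t, ∀ x ∈ B,
      ∃ᶠ r in 𝓝[>] 0, a * ω * ENNReal.ofReal r ^ s ≤ μ (ball x r) := by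
    intro a ha x hx
    have hlt := frequently_lt_of_lt_limsup (by isBoundedDefault) (ha.trans_le (hdens x hx))
    refine (hlt.and_eventually self_mem_nhdsWithin).mono fun r ⟨hr, hr0⟩ => ?_
    rw [mul_assoc, ENNReal.ofReal_rpow_of_nonneg (le_of_lt hr0) hs0,
      ← ENNReal.ofReal_mul' (Real.rpow_nonneg (le_of_lt hr0) s)]
    exact ENNReal.mul_le_of_le_div hr.le
  have hbound : ENNReal.ofReal t * ω * μH[s] B ≤ 2 ^ s * μ B := by
    rw [mul_assoc]
    refine ENNReal.mul_le_of_forall_lt fun a ha b hb => ?_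
    calc a * b ≤ a * ω * μH[s] B := by rw [mul_assoc]; gcongr
      _ ≤ 2 ^ s * μ B := mul_hausdorffMeasure_le μ hs0
          (ENNReal.mul_ne_top ha.ne_top ENNReal.ofReal_ne_top) (hball a ha)
  rw [normHausdorff, Measure.smul_apply, smul_eq_mul,
    ENNReal.ofReal_div_of_pos (Real.rpow_pos_of_pos two_pos s),
    ← ENNReal.ofReal_rpow_of_pos two_pos, ENNReal.ofReal_ofNat]
  calc ENNReal.ofReal t * (ω / 2 ^ s * μH[s] B) = ENNReal.ofReal t * ω * μH[s] B / 2 ^ s := by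
        simp only [div_eq_mul_inv]; ring
    _ ≤ μ B := ENNReal.div_le_of_le_mul' hbound

/-- Density estimate: if a Radon measure `μ` has `s`-dimensional upper density at least `t`
at every point of a Borel set `B`, then `μ B ≥ t · H^s(B)`. -/
theorem density_lower_estimate {n : ℕ} (μ : Measure (EuclideanSpace ℝ (Fin n)))
    [μ.Regular] (B : Set (EuclideanSpace ℝ (Fin n))) (hB : MeasurableSet B)
    (s t : ℝ) (hs0 : 0 ≤ s) (hsn : s ≤ n) (ht : 0 < t)
    (hdens : ∀ x ∈ B, ENNReal.ofReal t ≤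
      Filter.limsup
        (fun r : ℝ => μ (ball x r) / ENNReal.ofReal (omegaConst s * r ^ s))
        (nhdsWithin 0 (Set.Ioi 0))) :
    ENNReal.ofReal t * normHausdorff n s B ≤ μ B :=
  density_lower_estimate_general μ B s t hs0 hdens
end

section
/- Let α ∈ (0,1/2), δ > 0, and let K ⊂ ℝⁿ be a bounded (α,δ)-porous set, i.e. for every x ∈ ℝⁿ and every ρ ∈ (0,δ) there exist y and r ∈ (αρ, ρ) with B_r(y) ⊂ B_ρ(x) \ K. Then there exist constants C = C(n,δ,diam K) > 0 and γ = γ(α,n) < n such that Lⁿ((K)_r) ≤ C r^{n-γ} for all r ∈ (0, diam K). In particular the Hausdorff dimension of K is at most γ < n. -/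
/-!
Let `N(s)` be the number of grid cubes of side `s` meeting `K`. Porosity applied to the ball
inscribed in a grid cube of side `s < 2δ` gives an empty ball of radius `> α s / 2`, which
contains a whole subcube of side `s / k` once `α k ≥ 2√n`. So every cube meeting `K` has at
most `kⁿ - 1` of its `kⁿ` children meeting `K`, and `N(δ / kᵐ) ≤ N(δ) (kⁿ - 1)ᵐ = N(δ) (kᵐ)^γ`
with `k^γ = kⁿ - 1`. The `r`-neighbourhood of `K` lies in the tripled cubes of a side
`s ∈ [r, k r)`, of total volume `≲ N(s) sⁿ ≲ r^(n-γ)`, and the same cubes show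
`μH[d] K ≤ lim N(s) sᵈ = 0` for every `d > γ`.
-/

open MeasureTheory Metric Set
open scoped ENNReal

/-- `K` is `(α,δ)`-porous: every ball `B_ρ(x)` with `ρ ∈ (0,δ)` contains a sub-ball
`B_r(y)` with `r ∈ (αρ, ρ)` disjoint from `K`. -/
def IsPorous {n : ℕ} (α δ : ℝ) (K : Set (EuclideanSpace ℝ (Fin n))) : Prop :=
  ∀ x : EuclideanSpace ℝ (Fin n), ∀ ρ : ℝ, 0 < ρ → ρ < δ →
    ∃ (y : EuclideanSpace ℝ (Fin n)) (r : ℝ),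
      α * ρ < r ∧ r < ρ ∧ ball y r ⊆ ball x ρ \ K

open Filter Topology

section Grid

variable {n : ℕ}

/-- The index `z ∈ ℤⁿ` of the cube `∏ [zᵢ s, (zᵢ + 1) s)` of the grid of side `s`
containing `x`. -/
noncomputable def gridIndex (s : ℝ) (x : EuclideanSpace ℝ (Fin n)) : Fin n → ℤ :=
  fun i => ⌊x i / s⌋

/-- The indices of the `kⁿ` cubes of side `s / k` subdividing the cube of side `s`
indexed by `z`. -/
noncomputable def gridChildren (k : ℕ) (z : Fin n → ℤ) : Finset (Fin n → ℤ) :=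
  Fintype.piFinset fun i => Finset.Ico (k * z i) (k * z i + k)

lemma card_gridChildren (k : ℕ) (z : Fin n → ℤ) : (gridChildren k z).card = k ^ n := by
  simp [gridChildren, Fintype.card_piFinset]

lemma gridIndex_eq_iff {s : ℝ} (hs : 0 < s) {x : EuclideanSpace ℝ (Fin n)} {z : Fin n → ℤ} :
    gridIndex s x = z ↔ ∀ i, z i * s ≤ x i ∧ x i < (z i + 1) * s := by
  simp only [funext_iff, gridIndex, Int.floor_eq_iff, le_div_iff₀ hs, div_lt_iff₀ hs]

lemma gridIndex_div_mem_gridChildren {k : ℕ} (hk : 0 < k) (s : ℝ)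
    (x : EuclideanSpace ℝ (Fin n)) : gridIndex (s / k) x ∈ gridChildren k (gridIndex s x) := by
  have hparent : ∀ i, gridIndex s x i = gridIndex (s / k) x i / k := fun i => by
    rw [gridIndex, gridIndex, ← Int.floor_div_natCast, div_div,
      div_mul_cancel₀ _ (Nat.cast_ne_zero.2 hk.ne')]
  simp only [gridChildren, Fintype.mem_piFinset, Finset.mem_Ico, hparent]
  exact fun i => ⟨Int.mul_ediv_self_le (by exact_mod_cast hk.ne'),
    Int.lt_mul_ediv_self_add (by exact_mod_cast hk)⟩

lemma dist_le_of_gridIndex_eq {s : ℝ} (hs : 0 < s) {x y : EuclideanSpace ℝ (Fin n)}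
    (h : gridIndex s x = gridIndex s y) : dist x y ≤ √n * s := by
  have hcoord : ∀ i, dist (x i) (y i) ≤ s := fun i => by
    have := Int.abs_sub_lt_one_of_floor_eq_floor (congrFun h i)
    rw [← sub_div, abs_div, abs_of_pos hs, div_lt_one hs] at this
    exact this.le
  calc dist x y = √(∑ i, dist (x i) (y i) ^ 2) := EuclideanSpace.dist_eq x y
    _ ≤ √(∑ _i : Fin n, s ^ 2) := by gcongr with i; exact hcoord i
    _ = √n * s := by simp [Real.sqrt_mul, hs.le]

lemma ediam_gridIndex_preimage_le {s : ℝ} (hs : 0 < s) (z : Fin n → ℤ) :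
    ediam (gridIndex s ⁻¹' {z} : Set (EuclideanSpace ℝ (Fin n))) ≤ ENNReal.ofReal (√n * s) :=
  ediam_le fun x hx y hy => by
    rw [edist_dist]
    exact ENNReal.ofReal_le_ofReal (dist_le_of_gridIndex_eq hs (hx.trans hy.symm))

lemma Bornology.IsBounded.finite_image_gridIndex {K : Set (EuclideanSpace ℝ (Fin n))}
    (hK : Bornology.IsBounded K) (s : ℝ) : (gridIndex s '' K).Finite := by
  obtain ⟨R, hR⟩ := (isBounded_iff_subset_closedBall 0).1 hK
  refine (Set.Finite.pi fun _ : Fin n => Set.finite_Icc ⌊-(R / |s|)⌋ ⌊R / |s|⌋).subset ?_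
  rintro _ ⟨x, hx, rfl⟩ i -
  have hxi : |x i / s| ≤ R / |s| := by
    rw [abs_div]
    gcongr
    simpa using (PiLp.norm_apply_le x i).trans (mem_closedBall_zero_iff.1 (hR hx))
  exact ⟨Int.floor_mono (neg_le_of_abs_le hxi), Int.floor_mono (le_of_abs_le hxi)⟩

end Grid

section Porosity

variable {n : ℕ} {α δ : ℝ} {K : Set (EuclideanSpace ℝ (Fin n))}

/-- The empty ball that porosity gives inside the ball inscribed in the cube `z` contains
a whole child of `z`. -/
lemma IsPorous.exists_mem_gridChildren_notMem_image (hP : IsPorous α δ K) (hα : 0 < α)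
    {k : ℕ} (hk : 0 < k) (hαk : 2 * √n ≤ α * k) {s : ℝ} (hs : 0 < s) (hsδ : s < 2 * δ)
    (z : Fin n → ℤ) : ∃ w ∈ gridChildren k z, w ∉ gridIndex (s / k) '' K := by
  obtain ⟨y, r, hαr, -, hsub⟩ :=
    hP (WithLp.toLp 2 fun i => (z i + 1 / 2) * s) (s / 2) (by positivity) (by linarith)
  have hr : 0 < r := lt_trans (by positivity) hαr
  have hyz : gridIndex s y = z := by
    refine (gridIndex_eq_iff hs).2 fun i => ?_
    have hyi := (PiLp.dist_apply_le _ _ i).trans_lt (hsub (mem_ball_self hr)).1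
    rw [Real.dist_eq, abs_lt] at hyi
    dsimp only at hyi
    constructor <;> linarith
  refine ⟨gridIndex (s / k) y, hyz ▸ gridIndex_div_mem_gridChildren hk s y, ?_⟩
  rintro ⟨x, hxK, hxw⟩
  have hxy : dist x y < r := calc
    dist x y ≤ √n * (s / k) := dist_le_of_gridIndex_eq (by positivity) hxw
    _ ≤ α * (s / 2) := by
      rw [mul_div_assoc', mul_div_assoc', div_le_div_iff₀ (by positivity) two_pos]
      nlinarith
    _ < r := hαr
  exact (hsub hxy).2 hxK

lemma IsPorous.ncard_image_gridIndex_div_le (hP : IsPorous α δ K) (hα : 0 < α)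
    (hK : Bornology.IsBounded K) {k : ℕ} (hk : 0 < k) (hαk : 2 * √n ≤ α * k) {s : ℝ}
    (hs : 0 < s) (hsδ : s < 2 * δ) :
    (gridIndex (s / k) '' K).ncard ≤ (k ^ n - 1) * (gridIndex s '' K).ncard := by
  choose w hw hwK using hP.exists_mem_gridChildren_notMem_image hα hk hαk hs hsδ
  obtain ⟨T, hT⟩ : ∃ T : Finset (Fin n → ℤ), ↑T = gridIndex s '' K :=
    ⟨_, (hK.finite_image_gridIndex s).coe_toFinset⟩
  have hcover :
      gridIndex (s / k) '' K ⊆ ⋃ z ∈ T, ((gridChildren k z).erase (w z) : Set (Fin n → ℤ)) := by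
    rintro _ ⟨x, hx, rfl⟩
    exact mem_biUnion (hT ▸ mem_image_of_mem _ hx)
      (Finset.mem_erase.2 ⟨fun h => hwK _ ⟨x, hx, h⟩, gridIndex_div_mem_gridChildren hk s x⟩)
  calc (gridIndex (s / k) '' K).ncard
      ≤ (⋃ z ∈ T, ((gridChildren k z).erase (w z) : Set (Fin n → ℤ))).ncard :=
        ncard_le_ncard hcover (T.finite_toSet.biUnion fun z _ => Finset.finite_toSet _)
    _ ≤ ∑ z ∈ T, ((gridChildren k z).erase (w z) : Set (Fin n → ℤ)).ncard :=
        T.set_ncard_biUnion_le _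
    _ = (k ^ n - 1) * (gridIndex s '' K).ncard := by
        rw [← hT, ncard_coe_finset, Finset.sum_congr rfl fun z _ => by
          rw [ncard_coe_finset, Finset.card_erase_of_mem (hw z), card_gridChildren],
          Finset.sum_const, smul_eq_mul, mul_comm]

lemma IsPorous.ncard_image_gridIndex_div_pow_le (hP : IsPorous α δ K) (hα : 0 < α)
    (hδ : 0 < δ) (hK : Bornology.IsBounded K) {k : ℕ} (hk : 0 < k) (hαk : 2 * √n ≤ α * k)
    (m : ℕ) : (gridIndex (δ / (k : ℝ) ^ m) '' K).ncard ≤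
      (k ^ n - 1) ^ m * (gridIndex δ '' K).ncard := by
  induction m with
  | zero => simp
  | succ m ih =>
    have hs : 0 < δ / (k : ℝ) ^ m := by positivity
    have hsδ : δ / (k : ℝ) ^ m < 2 * δ :=
      (div_le_self hδ.le (one_le_pow₀ (Nat.one_le_cast.2 hk))).trans_lt (by linarith)
    calc (gridIndex (δ / (k : ℝ) ^ (m + 1)) '' K).ncard
        = (gridIndex (δ / (k : ℝ) ^ m / k) '' K).ncard := by rw [pow_succ, div_div]
      _ ≤ (k ^ n - 1) * (gridIndex (δ / (k : ℝ) ^ m) '' K).ncard :=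
        hP.ncard_image_gridIndex_div_le hα hK hk hαk hs hsδ
      _ ≤ (k ^ n - 1) * ((k ^ n - 1) ^ m * (gridIndex δ '' K).ncard) :=
        Nat.mul_le_mul_left _ ih
      _ = (k ^ n - 1) ^ (m + 1) * (gridIndex δ '' K).ncard := by rw [pow_succ', mul_assoc]

lemma IsPorous.ncard_image_gridIndex_div_pow_le_rpow (hP : IsPorous α δ K) (hα : 0 < α)
    (hδ : 0 < δ) (hK : Bornology.IsBounded K) (hn : 0 < n) {k : ℕ} (hk : 1 < k)
    (hαk : 2 * √n ≤ α * k) (m : ℕ) :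
    ((gridIndex (δ / (k : ℝ) ^ m) '' K).ncard : ℝ) ≤
      (gridIndex δ '' K).ncard * ((k : ℝ) ^ m) ^ Real.logb k ((k : ℝ) ^ n - 1) := by
  have hk' : (1 : ℝ) < k := Nat.one_lt_cast.2 hk
  rw [← Real.rpow_pow_comm (by positivity),
    Real.rpow_logb (by positivity) hk'.ne' (by linarith [one_lt_pow₀ hk' hn.ne']), mul_comm]
  have hcast : ((k ^ n - 1 : ℕ) : ℝ) = (k : ℝ) ^ n - 1 := by
    rw [Nat.cast_sub (Nat.one_le_pow _ _ (by omega)), Nat.cast_pow, Nat.cast_one]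
  calc ((gridIndex (δ / (k : ℝ) ^ m) '' K).ncard : ℝ)
      ≤ ((k ^ n - 1) ^ m * (gridIndex δ '' K).ncard : ℕ) :=
        Nat.cast_le.2 (hP.ncard_image_gridIndex_div_pow_le hα hδ hK (by omega) hαk m)
    _ = ((k : ℝ) ^ n - 1) ^ m * (gridIndex δ '' K).ncard := by
        rw [Nat.cast_mul, Nat.cast_pow, hcast]

end Porosity

section Volume

variable {n : ℕ} {K : Set (EuclideanSpace ℝ (Fin n))}

/-- `thickening r K` is covered by the cubes of side `3 s` concentric with the grid cubes
of side `s` meeting `K`. -/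
lemma volume_thickening_le_ncard_image_gridIndex_mul {r s : ℝ} (hs : 0 < s) (hrs : r ≤ s)
    (hK : (gridIndex s '' K).Finite) :
    volume (thickening r K) ≤ (gridIndex s '' K).ncard * ENNReal.ofReal ((3 * s) ^ n) := by
  obtain ⟨T, hT⟩ : ∃ T : Finset (Fin n → ℤ), ↑T = gridIndex s '' K := ⟨_, hK.coe_toFinset⟩
  let box : (Fin n → ℤ) → Set (EuclideanSpace ℝ (Fin n)) := fun z =>
    WithLp.ofLp ⁻¹' Icc (fun i => (z i - 1) * s) (fun i => (z i + 2) * s)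
  have hcover : thickening r K ⊆ ⋃ z ∈ T, box z := by
    intro x hx
    obtain ⟨p, hpK, hpx⟩ := mem_thickening_iff.1 hx
    refine mem_biUnion (hT ▸ mem_image_of_mem (gridIndex s) hpK)
      ⟨fun i => ?_, fun i => ?_⟩ <;>
    · have hp := (gridIndex_eq_iff hs (x := p)).1 rfl i
      have hxp := (PiLp.dist_apply_le x p i).trans_lt (hpx.trans_le hrs)
      rw [Real.dist_eq, abs_lt] at hxp
      dsimp only
      linarith [hp.1, hp.2]
  have hbox : ∀ z, volume (box z) = ENNReal.ofReal ((3 * s) ^ n) := fun z => by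
    rw [(PiLp.volume_preserving_ofLp (Fin n)).measure_preimage
      measurableSet_Icc.nullMeasurableSet, Real.volume_Icc_pi, ENNReal.ofReal_pow (by positivity)]
    simp only [show ∀ i, (z i + 2) * s - (z i - 1) * s = 3 * s from fun i => by ring,
      Finset.prod_const, Finset.card_univ, Fintype.card_fin]
  calc volume (thickening r K) ≤ volume (⋃ z ∈ T, box z) := measure_mono hcover
    _ ≤ ∑ z ∈ T, volume (box z) := measure_biUnion_finset_le _ _
    _ = (gridIndex s '' K).ncard * ENNReal.ofReal ((3 * s) ^ n) := by
      rw [Finset.sum_congr rfl fun z _ => hbox z, Finset.sum_const, nsmul_eq_mul, ← hT,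
        ncard_coe_finset]

lemma div_rpow_mul_rpow {δ s : ℝ} (hδ : 0 ≤ δ) (hs : 0 < s) (γ e : ℝ) :
    (δ / s) ^ γ * s ^ e = δ ^ γ * s ^ (e - γ) := by
  rw [Real.div_rpow hδ hs.le, Real.rpow_sub hs]
  field_simp

lemma exists_volume_thickening_le_of_ncard_image_gridIndex_le (hK : Bornology.IsBounded K)
    {δ κ γ N₀ : ℝ} (hδ : 0 < δ) (hκ : 1 < κ) (hγn : γ ≤ n)
    (hcount : ∀ m : ℕ, ((gridIndex (δ / κ ^ m) '' K).ncard : ℝ) ≤ N₀ * (κ ^ m) ^ γ) :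
    ∃ C, ∀ r, 0 < r → r ≤ δ →
      volume (thickening r K) ≤ ENNReal.ofReal (C * r ^ ((n : ℝ) - γ)) := by
  have hN₀ : 0 ≤ N₀ := by simpa using (Nat.cast_nonneg _).trans (hcount 0)
  refine ⟨N₀ * 3 ^ n * δ ^ γ * κ ^ ((n : ℝ) - γ), fun r hr hrδ => ?_⟩
  obtain ⟨m, hm, hm'⟩ := exists_nat_pow_near ((one_le_div hr).2 hrδ) hκ
  have hκm : 0 < κ ^ m := by positivity
  set s := δ / κ ^ m
  have hs : 0 < s := by positivity
  have hrs : r ≤ s := (le_div_iff₀ hκm).2 (by rw [mul_comm]; exact (le_div_iff₀ hr).1 hm)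
  have hsr : s < κ * r := by
    rw [div_lt_iff₀ hκm]
    rw [div_lt_iff₀ hr, pow_succ] at hm'
    linarith
  calc volume (thickening r K)
      ≤ (gridIndex s '' K).ncard * ENNReal.ofReal ((3 * s) ^ n) :=
        volume_thickening_le_ncard_image_gridIndex_mul hs hrs (hK.finite_image_gridIndex s)
    _ = ENNReal.ofReal ((gridIndex s '' K).ncard * (3 ^ n * s ^ (n : ℝ))) := by
        rw [← ENNReal.ofReal_natCast, ← ENNReal.ofReal_mul (by positivity), mul_pow,
          Real.rpow_natCast]
    _ ≤ ENNReal.ofReal (N₀ * (δ / s) ^ γ * (3 ^ n * s ^ (n : ℝ))) := by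
        gcongr
        simpa only [s, div_div_cancel₀ hδ.ne'] using hcount m
    _ = ENNReal.ofReal (N₀ * 3 ^ n * δ ^ γ * s ^ ((n : ℝ) - γ)) := by
        congr 1
        linear_combination (N₀ * 3 ^ n) * div_rpow_mul_rpow hδ.le hs γ n
    _ ≤ ENNReal.ofReal (N₀ * 3 ^ n * δ ^ γ * (κ * r) ^ ((n : ℝ) - γ)) := by
        gcongr
    _ = ENNReal.ofReal (N₀ * 3 ^ n * δ ^ γ * κ ^ ((n : ℝ) - γ) * r ^ ((n : ℝ) - γ)) := by
        rw [Real.mul_rpow (by positivity) hr.le, ← mul_assoc]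

end Volume

/-- Radii in `(δ, R]` are handled by the finite measure of `thickening R K`. -/
lemma exists_pos_measure_thickening_le_of_forall_le {X : Type*} [PseudoMetricSpace X]
    [ProperSpace X] [MeasurableSpace X] {μ : Measure X} [IsFiniteMeasureOnCompacts μ]
    {K : Set X} (hK : Bornology.IsBounded K) {δ e C : ℝ} (hδ : 0 < δ) (he : 0 ≤ e)
    (h : ∀ r, 0 < r → r ≤ δ → μ (thickening r K) ≤ ENNReal.ofReal (C * r ^ e)) (R : ℝ) :
    ∃ C' > 0, ∀ r, 0 < r → r ≤ R → μ (thickening r K) ≤ ENNReal.ofReal (C' * r ^ e) := by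
  set V := (μ (thickening R K)).toReal
  have hδe : 0 < δ ^ e := by positivity
  have hV : 0 ≤ V / δ ^ e := by positivity
  refine ⟨max C 0 + V / δ ^ e + 1, by positivity, fun r hr hrR => ?_⟩
  rcases le_or_gt r δ with hrδ | hδr
  · refine (h r hr hrδ).trans (ENNReal.ofReal_le_ofReal ?_)
    gcongr
    linarith [le_max_left C 0]
  · calc μ (thickening r K) ≤ μ (thickening R K) := measure_mono (thickening_mono hrR K)
      _ = ENNReal.ofReal V := (ENNReal.ofReal_toReal hK.thickening.measure_lt_top.ne).symm
      _ ≤ ENNReal.ofReal (V / δ ^ e * r ^ e) := by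
        gcongr
        rw [div_mul_eq_mul_div, le_div_iff₀ hδe]
        gcongr
      _ ≤ ENNReal.ofReal ((max C 0 + V / δ ^ e + 1) * r ^ e) := by
        gcongr
        linarith [le_max_right C 0]

theorem hausdorffMeasure_eq_zero_of_finite_covers {X ι : Type*} [EMetricSpace X]
    [MeasurableSpace X] [BorelSpace X] {s : Set X} {d : ℝ} (hd : 0 ≤ d) (T : ℕ → Finset ι)
    (t : ℕ → ι → Set X) (ε : ℕ → ℝ≥0∞) (hε : Tendsto ε atTop (𝓝 0))
    (hdiam : ∀ m i, ediam (t m i) ≤ ε m) (hcov : ∀ m, s ⊆ ⋃ i ∈ T m, t m i)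
    (hcount : Tendsto (fun m => (T m).card * ε m ^ d) atTop (𝓝 0)) : μH[d] s = 0 := by
  refine nonpos_iff_eq_zero.1 ?_
  calc μH[d] s ≤ liminf (fun m => ∑ i : T m, ediam (t m i) ^ d) atTop :=
        Measure.hausdorffMeasure_le_liminf_sum d s ε hε (fun m (i : T m) => t m i)
          (Eventually.of_forall fun m i => hdiam m i)
          (Eventually.of_forall fun m => by simpa only [iUnion_subtype] using hcov m)
    _ ≤ liminf (fun m => (T m).card * ε m ^ d) atTop := by
        refine liminf_le_liminf (Eventually.of_forall fun m => ?_)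
        calc ∑ i : T m, ediam (t m i) ^ d ≤ ∑ _i : T m, ε m ^ d := by
              gcongr with i; exact hdiam m i
          _ = (T m).card * ε m ^ d := by simp
    _ = 0 := hcount.liminf_eq

lemma dimH_le_of_ncard_image_gridIndex_le {n : ℕ} {K : Set (EuclideanSpace ℝ (Fin n))}
    (hK : Bornology.IsBounded K) {δ κ γ N₀ : ℝ} (hδ : 0 < δ) (hκ : 1 < κ)
    (hcount : ∀ m : ℕ, ((gridIndex (δ / κ ^ m) '' K).ncard : ℝ) ≤ N₀ * (κ ^ m) ^ γ) :
    dimH K ≤ ENNReal.ofReal γ := by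
  refine dimH_le fun d hd => le_of_not_gt fun hγd => ?_
  have hγd : γ < d := (ENNReal.ofReal_lt_ofReal_iff'.1 (by rwa [ENNReal.ofReal_coe_nnreal])).1
  set s : ℕ → ℝ := fun m => δ / κ ^ m
  have hs : ∀ m, 0 < s m := fun m => by positivity
  have hs0 : Tendsto s atTop (𝓝 0) :=
    tendsto_const_nhds.div_atTop (tendsto_pow_atTop_atTop_of_one_lt hκ)
  have hbound : ∀ m, ((gridIndex (s m) '' K).ncard : ℝ) * (√n * s m) ^ (d : ℝ) ≤
      N₀ * δ ^ γ * √n ^ (d : ℝ) * s m ^ ((d : ℝ) - γ) := fun m => by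
    have hN : ((gridIndex (s m) '' K).ncard : ℝ) ≤ N₀ * (δ / s m) ^ γ := by
      simpa only [s, div_div_cancel₀ hδ.ne'] using hcount m
    calc ((gridIndex (s m) '' K).ncard : ℝ) * (√n * s m) ^ (d : ℝ)
        ≤ N₀ * (δ / s m) ^ γ * (√n ^ (d : ℝ) * s m ^ (d : ℝ)) := by
          rw [Real.mul_rpow (by positivity) (hs m).le]
          gcongr
      _ = N₀ * δ ^ γ * √n ^ (d : ℝ) * s m ^ ((d : ℝ) - γ) := by
          linear_combination (N₀ * √n ^ (d : ℝ)) * div_rpow_mul_rpow hδ.le (hs m) γ d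
  have hlim : Tendsto (fun m => N₀ * δ ^ γ * √n ^ (d : ℝ) * s m ^ ((d : ℝ) - γ)) atTop (𝓝 0) := by
    simpa [Real.zero_rpow (sub_pos.2 hγd).ne'] using
      (hs0.rpow_const (Or.inr (sub_pos.2 hγd).le)).const_mul (N₀ * δ ^ γ * √n ^ (d : ℝ))
  have hzero : μH[d] K = 0 := by
    refine hausdorffMeasure_eq_zero_of_finite_covers d.coe_nonneg
      (fun m => (hK.finite_image_gridIndex (s m)).toFinset) (fun m z => gridIndex (s m) ⁻¹' {z})
      (fun m => ENNReal.ofReal (√n * s m)) ?_ (fun m z => ediam_gridIndex_preimage_le (hs m) z)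
      (fun m x hx => mem_biUnion (by simpa using mem_image_of_mem _ hx) rfl) ?_
    · simpa using ENNReal.tendsto_ofReal (hs0.const_mul √n)
    · refine tendsto_of_tendsto_of_tendsto_of_le_of_le tendsto_const_nhds
        (by simpa using ENNReal.tendsto_ofReal hlim) (fun _ => zero_le) fun m => ?_
      rw [← ncard_eq_toFinset_card _ (hK.finite_image_gridIndex _), ← ENNReal.ofReal_natCast,
        ENNReal.ofReal_rpow_of_nonneg (x := √n * s m) (by positivity) d.coe_nonneg,
        ← ENNReal.ofReal_mul (by positivity)]
      exact ENNReal.ofReal_le_ofReal (hbound m)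
  exact ENNReal.zero_ne_top (hzero ▸ hd)

lemma logb_pow_sub_one_lt {b : ℝ} (hb : 1 < b) {n : ℕ} (hn : n ≠ 0) :
    Real.logb b (b ^ n - 1) < n := by
  have hbn := one_lt_pow₀ hb hn
  calc Real.logb b (b ^ n - 1) < Real.logb b (b ^ n) :=
        Real.logb_lt_logb hb (by linarith) (by linarith)
    _ = n := by rw [← Real.rpow_natCast, Real.logb_rpow (by positivity) hb.ne']

/-- A bounded `(α,δ)`-porous set `K ⊂ ℝⁿ` satisfies `Lⁿ((K)_r) ≤ C r^{n-γ}` for all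
`r ∈ (0, diam K)`, for some constants `C > 0` and `γ < n`; in particular
its Hausdorff dimension is at most `γ < n`. -/
theorem porous_neighborhood_volume_bound {n : ℕ} (α δ : ℝ)
    (hα : α ∈ Set.Ioo 0 (1 / 2 : ℝ)) (hδ : 0 < δ)
    (K : Set (EuclideanSpace ℝ (Fin n))) (hK : Bornology.IsBounded K)
    (hP : IsPorous α δ K) :
    ∃ C : ℝ, 0 < C ∧ ∃ γ : ℝ, γ < n ∧
      (∀ r : ℝ, 0 < r → r < Metric.diam K →
        volume (Metric.thickening r K) ≤ ENNReal.ofReal (C * r ^ ((n : ℝ) - γ))) ∧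
      dimH K ≤ ENNReal.ofReal γ := by
  obtain ⟨hα, -⟩ := hα
  rcases Nat.eq_zero_or_pos n with rfl | hn
  · refine ⟨1, one_pos, -1, by norm_num, fun r hr hrK => ?_, ?_⟩
    · rw [diam_subsingleton subsingleton_of_subsingleton] at hrK
      exact absurd hr hrK.not_gt
    · simp [subsingleton_of_subsingleton.dimH_zero]
  obtain ⟨k, hk⟩ := exists_nat_gt (max 1 (2 * √n / α))
  have hk1 : 1 < k := Nat.one_lt_cast.1 ((le_max_left _ _).trans_lt hk)
  have hαk : 2 * √n ≤ α * k := ((div_lt_iff₀' hα).1 ((le_max_right _ _).trans_lt hk)).le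
  have hk' : (1 : ℝ) < k := Nat.one_lt_cast.2 hk1
  have hcount := hP.ncard_image_gridIndex_div_pow_le_rpow hα hδ hK hn hk1 hαk
  have hγn := logb_pow_sub_one_lt hk' hn.ne'
  obtain ⟨C, hC⟩ :=
    exists_volume_thickening_le_of_ncard_image_gridIndex_le hK hδ hk' hγn.le hcount
  obtain ⟨C', hC', hC'le⟩ :=
    exists_pos_measure_thickening_le_of_forall_le hK hδ (sub_nonneg.2 hγn.le) hC (diam K)
  exact ⟨C', hC', _, hγn, fun r hr hrK => hC'le r hr hrK.le,
    dimH_le_of_ncard_image_gridIndex_le hK hδ hk' hcount⟩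
end
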